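/- Any two minimal labelled Gröbner bases of I^[Σ] have the same cardinality. Consequently, I^[Σ] has a finite labelled Gröbner basis if and only if it has a finite minimal labelled Gröbner basis. -/

import Mathlib

open Finsupp

/-- The free algebra `K⟨X⟩`, realized as the monoid algebra of the free monoid. -/
abbrev FreeAlg (K X : Type*) [Field K] := MonoidAlgebra K (FreeMonoid X)

/-- Module monomials `a εᵢ b` of the free bimodule of rank `r`. -/
structure MonMod (X : Type*) (r : ℕ) where
  left : FreeMonoid X
  idx : Fin r
  right : FreeMonoid X

/-- The free bimodule `Σ = (K⟨X⟩ ⊗ K⟨X⟩)^r`, realized as the span of module monomials. -/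
abbrev FreeBimod (K X : Type*) [Field K] (r : ℕ) := MonMod X r →₀ K

/-- Two-sided action of a pair of words on a module monomial: `a·(c εᵢ d)·b = (ac) εᵢ (db)`. -/
def act {X : Type*} {r : ℕ} (a b : FreeMonoid X) (μ : MonMod X r) : MonMod X r :=
  ⟨a * μ.left, μ.idx, μ.right * b⟩

/-- The monomial `w` as an element of the free algebra. -/
noncomputable def mon (K : Type*) [Field K] {X : Type*} (w : FreeMonoid X) : FreeAlg K X :=
  MonoidAlgebra.of K (FreeMonoid X) w

/-- The evaluation homomorphism `Σ → K⟨X⟩`, `εᵢ ↦ fᵢ`. -/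
noncomputable def evalS {K X : Type*} [Field K] {r : ℕ} (F : Fin r → FreeAlg K X)
    (α : FreeBimod K X r) : FreeAlg K X :=
  α.sum fun μ c => c • (mon K μ.left * F μ.idx * mon K μ.right)

section Orders

variable {K X : Type*} [Field K] [LinearOrder (FreeMonoid X)] {r : ℕ}
  [LinearOrder (MonMod X r)]

/-- The signature of a module element: the largest module monomial of its support
(`⊥` for the zero element). -/
noncomputable def sigW (α : FreeBimod K X r) : WithBot (MonMod X r) := α.support.max

/-- The leading monomial of a nonzero polynomial (junk value `1` for `0`). -/
noncomputable def lmon (p : FreeAlg K X) : FreeMonoid X :=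
  if h : p.coeff.support.Nonempty then p.coeff.support.max' h else 1

/-- The leading coefficient. -/
noncomputable def lcoeff (p : FreeAlg K X) : K := p.coeff (lmon p)

/-- The leading term. -/
noncomputable def lterm (p : FreeAlg K X) : FreeAlg K X :=
  MonoidAlgebra.single (lmon p) (lcoeff p)

/-- `f^[α]` is top s-reducible by the set `G^[Σ]`. -/
def TopSRed (G : Set (FreeAlg K X × FreeBimod K X r)) (f : FreeAlg K X)
    (α : FreeBimod K X r) : Prop :=
  ∃ g γ, (g, γ) ∈ G ∧ g ≠ 0 ∧ ∃ a b : FreeMonoid X,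
    a * lmon g * b = lmon f ∧ WithBot.map (act a b) (sigW γ) ≤ sigW α

/-- `f^[α]` is singular top s-reducible by `G^[Σ]`. -/
def SingTopSRed (G : Set (FreeAlg K X × FreeBimod K X r)) (f : FreeAlg K X)
    (α : FreeBimod K X r) : Prop :=
  f ≠ 0 ∧ ∃ g γ, (g, γ) ∈ G ∧ g ≠ 0 ∧ ∃ a b : FreeMonoid X,
    a * lmon g * b = lmon f ∧ WithBot.map (act a b) (sigW γ) = sigW α

/-- `f^[α]` admits a regular s-reduction by `G^[Σ]`. -/
def RegSRedible (G : Set (FreeAlg K X × FreeBimod K X r)) (f : FreeAlg K X)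
    (α : FreeBimod K X r) : Prop :=
  ∃ g γ, (g, γ) ∈ G ∧ g ≠ 0 ∧ ∃ a b : FreeMonoid X,
    a * lmon g * b ∈ f.coeff.support ∧ WithBot.map (act a b) (sigW γ) < sigW α

/-- `f^[α]` admits a regular *top* s-reduction by `G^[Σ]`. -/
def RegTopSRedible (G : Set (FreeAlg K X × FreeBimod K X r)) (f : FreeAlg K X)
    (α : FreeBimod K X r) : Prop :=
  f ≠ 0 ∧ ∃ g γ, (g, γ) ∈ G ∧ g ≠ 0 ∧ ∃ a b : FreeMonoid X,
    a * lmon g * b = lmon f ∧ WithBot.map (act a b) (sigW γ) < sigW α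

/-- Result of one s-reduction step of `f^[α]` by `a g^[γ] b`. -/
noncomputable def sredResult (f : FreeAlg K X) (α : FreeBimod K X r)
    (g : FreeAlg K X) (γ : FreeBimod K X r) (a b : FreeMonoid X) :
    FreeAlg K X × FreeBimod K X r :=
  (f - (f.coeff (a * lmon g * b) * (lcoeff g)⁻¹) • (mon K a * g * mon K b),
   α - (f.coeff (a * lmon g * b) * (lcoeff g)⁻¹) • Finsupp.mapDomain (act a b) γ)

/-- One s-reduction step by `G^[Σ]`. -/
def SRedStep (G : Set (FreeAlg K X × FreeBimod K X r))
    (p q : FreeAlg K X × FreeBimod K X r) : Prop :=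
  ∃ g γ, (g, γ) ∈ G ∧ g ≠ 0 ∧ ∃ a b : FreeMonoid X,
    a * lmon g * b ∈ p.1.coeff.support ∧ WithBot.map (act a b) (sigW γ) ≤ sigW p.2 ∧
    q = sredResult p.1 p.2 g γ a b

/-- One *regular* s-reduction step by `G^[Σ]`. -/
def RegSRedStep (G : Set (FreeAlg K X × FreeBimod K X r))
    (p q : FreeAlg K X × FreeBimod K X r) : Prop :=
  ∃ g γ, (g, γ) ∈ G ∧ g ≠ 0 ∧ ∃ a b : FreeMonoid X,
    a * lmon g * b ∈ p.1.coeff.support ∧ WithBot.map (act a b) (sigW γ) < sigW p.2 ∧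
    q = sredResult p.1 p.2 g γ a b

/-- `p` s-reduces to zero by `G^[Σ]`. -/
def SRedToZero (G : Set (FreeAlg K X × FreeBimod K X r))
    (p : FreeAlg K X × FreeBimod K X r) : Prop :=
  ∃ σ : FreeBimod K X r, Relation.ReflTransGen (SRedStep G) p (0, σ)

/-- `p` regular s-reduces to zero by `G^[Σ]`. -/
def RegSRedToZero (G : Set (FreeAlg K X × FreeBimod K X r))
    (p : FreeAlg K X × FreeBimod K X r) : Prop :=
  ∃ σ : FreeBimod K X r, Relation.ReflTransGen (RegSRedStep G) p (0, σ)

/-- `G^[Σ] ⊆ I^[Σ]`: labelled polynomials with nonzero polynomial part. -/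
def InLab (F : Fin r → FreeAlg K X) (G : Set (FreeAlg K X × FreeBimod K X r)) : Prop :=
  ∀ p ∈ G, p.1 = evalS F p.2 ∧ p.1 ≠ 0

/-- `G^[Σ]` is a labelled Gröbner basis of `I^[Σ]`. -/
def LabGB (F : Fin r → FreeAlg K X) (G : Set (FreeAlg K X × FreeBimod K X r)) : Prop :=
  InLab F G ∧ ∀ (f : FreeAlg K X) (α : FreeBimod K X r), f = evalS F α → SRedToZero G (f, α)

/-- `G^[Σ]` is a labelled Gröbner basis of `I^[Σ]` up to signature `σ`. -/
def LabGBUpTo (F : Fin r → FreeAlg K X) (G : Set (FreeAlg K X × FreeBimod K X r))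
    (σ : MonMod X r) : Prop :=
  InLab F G ∧ ∀ (f : FreeAlg K X) (α : FreeBimod K X r), f = evalS F α →
    sigW α < (σ : WithBot (MonMod X r)) → SRedToZero G (f, α)

/-- `G^[Σ]` is a *minimal* labelled Gröbner basis of `I^[Σ]`. -/
def MinLabGB (F : Fin r → FreeAlg K X) (G : Set (FreeAlg K X × FreeBimod K X r)) : Prop :=
  LabGB F G ∧ ∀ p ∈ G, ¬ TopSRed (G \ {p}) p.1 p.2

end Orders

/-!
Say that `p` top s-divides `q` if some `a p b` has the leading monomial of `q` and
signature at most that of `q`. This is a preorder, and a labelled Gröbner basis is exactly a set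
whose elements top s-divide every nonzero labelled polynomial of `I^[Σ]`. Comparing leading
monomials in length shows that two labelled polynomials dividing each other have the same leading
monomial and signature. Hence in a minimal basis `G` no element divides another one, and every
`g ∈ G` is divided by some `h` of any other basis `H`, which in turn is divided by an element of
`G`, necessarily `g` itself. So `g ↦ h` is injective, and Schröder–Bernstein gives the first claim.
For the second, an inclusion-minimal labelled Gröbner basis inside a finite one is minimal, since
removing an element that is top s-reducible by the others preserves the basis property.
-/

section Evaluation

variable {K X : Type*} [Field K] {r : ℕ}

lemma coeff_mon_mul_mul_mon (a b : FreeMonoid X) (g : FreeAlg K X) :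
    (mon K a * g * mon K b).coeff = Finsupp.mapDomain (fun u => a * u * b) g.coeff := by
  induction g using MonoidAlgebra.induction_linear with
  | zero => simp
  | add f g hf hg =>
    rw [mul_add, add_mul, MonoidAlgebra.coeff_add, hf, hg, MonoidAlgebra.coeff_add,
      Finsupp.mapDomain_add]
  | single u c =>
    rw [MonoidAlgebra.coeff_single, Finsupp.mapDomain_single, mon, MonoidAlgebra.of_apply, mon,
      MonoidAlgebra.of_apply, MonoidAlgebra.single_mul_single, MonoidAlgebra.single_mul_single,
      one_mul, mul_one]
    rfl

lemma coeff_mon_mul_mul_mon_apply (a b : FreeMonoid X) (g : FreeAlg K X) (u : FreeMonoid X) :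
    (mon K a * g * mon K b).coeff (a * u * b) = g.coeff u := by
  rw [coeff_mon_mul_mul_mon]
  exact Finsupp.mapDomain_apply (fun _ _ h => mul_left_cancel (mul_right_cancel h)) _ _

@[simp]
lemma act_one_one : act (1 : FreeMonoid X) 1 = (id : MonMod X r → MonMod X r) := by
  funext μ
  simp [act]

lemma act_comp_act (a b a' b' : FreeMonoid X) :
    act a b ∘ act a' b' = (act (a * a') (b' * b) : MonMod X r → MonMod X r) := by
  funext μ
  simp [act, mul_assoc]

lemma evalS_eq_linearCombination (F : Fin r → FreeAlg K X) :
    evalS F = Finsupp.linearCombination K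
      (fun μ : MonMod X r => mon K μ.left * F μ.idx * mon K μ.right) := by
  funext α
  rw [Finsupp.linearCombination_apply]
  rfl

lemma evalS_sub (F : Fin r → FreeAlg K X) (α β : FreeBimod K X r) :
    evalS F (α - β) = evalS F α - evalS F β := by
  rw [evalS_eq_linearCombination, map_sub]

lemma evalS_smul (F : Fin r → FreeAlg K X) (c : K) (α : FreeBimod K X r) :
    evalS F (c • α) = c • evalS F α := by
  rw [evalS_eq_linearCombination, map_smul]

lemma evalS_mapDomain_act (F : Fin r → FreeAlg K X) (a b : FreeMonoid X) (γ : FreeBimod K X r) :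
    evalS F (Finsupp.mapDomain (act a b) γ) = mon K a * evalS F γ * mon K b := by
  rw [evalS_eq_linearCombination, Finsupp.linearCombination_mapDomain,
    Finsupp.linearCombination_apply, Finsupp.linearCombination_apply, Finsupp.sum, Finsupp.sum,
    Finset.mul_sum, Finset.sum_mul]
  refine Finset.sum_congr rfl fun μ _ => ?_
  simp only [Function.comp_apply, act, mon, map_mul, mul_smul_comm, smul_mul_assoc, mul_assoc]

end Evaluation

section Monomials

variable {K X : Type*} [Field K] [LinearOrder (FreeMonoid X)]

lemma lmon_mem_support {f : FreeAlg K X} (hf : f ≠ 0) : lmon f ∈ f.coeff.support := by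
  rw [lmon, dif_pos (Finsupp.support_nonempty_iff.2 (mt MonoidAlgebra.coeff_eq_zero.1 hf))]
  exact Finset.max'_mem _ _

lemma le_lmon {f : FreeAlg K X} {m : FreeMonoid X} (hm : m ∈ f.coeff.support) : m ≤ lmon f := by
  rw [lmon, dif_pos ⟨m, hm⟩]
  exact Finset.le_max' _ _ hm

lemma lcoeff_ne_zero {f : FreeAlg K X} (hf : f ≠ 0) : lcoeff f ≠ 0 :=
  Finsupp.mem_support_iff.1 (lmon_mem_support hf)

lemma lmon_eq_of_coeff_ne_zero {f : FreeAlg K X} {w : FreeMonoid X} (hw : f.coeff w ≠ 0)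
    (h : ∀ m ∈ f.coeff.support, m ≤ w) : lmon f = w :=
  le_antisymm (h _ (lmon_mem_support fun hf => by simp [hf] at hw))
    (le_lmon (Finsupp.mem_support_iff.2 hw))

lemma lmon_lt_of_coeff_eq_zero {f : FreeAlg K X} (hf : f ≠ 0) {w : FreeMonoid X}
    (hw : f.coeff w = 0) (h : ∀ m ∈ f.coeff.support, m ≤ w) : lmon f < w :=
  (h _ (lmon_mem_support hf)).lt_of_ne fun he =>
    Finsupp.mem_support_iff.1 (he ▸ lmon_mem_support hf) hw

lemma le_lmon_of_mem_support_sub_smul {f g : FreeAlg K X} (hgf : lmon g ≤ lmon f) (c : K)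
    {m : FreeMonoid X} (hm : m ∈ (f - c • g).coeff.support) : m ≤ lmon f := by
  rw [MonoidAlgebra.coeff_sub, MonoidAlgebra.coeff_smul] at hm
  rcases Finset.mem_union.1 (Finsupp.support_sub hm) with hf | hg
  · exact le_lmon hf
  · exact (le_lmon (Finsupp.support_smul hg)).trans hgf

lemma lmon_sub_smul_of_lmon_lt {f g : FreeAlg K X} (hf : f ≠ 0) (hgf : lmon g < lmon f)
    (c : K) : f - c • g ≠ 0 ∧ lmon (f - c • g) = lmon f := by
  have hcoeff : (f - c • g).coeff (lmon f) = lcoeff f := by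
    have hg : g.coeff (lmon f) = 0 :=
      Finsupp.notMem_support_iff.1 fun hm => (le_lmon hm).not_gt hgf
    simp [MonoidAlgebra.coeff_sub, hg, lcoeff]
  have hne : (f - c • g).coeff (lmon f) ≠ 0 := hcoeff ▸ lcoeff_ne_zero hf
  exact ⟨fun h => by simp [h] at hne,
    lmon_eq_of_coeff_ne_zero hne fun _ => le_lmon_of_mem_support_sub_smul hgf.le c⟩

lemma lmon_sub_smul_lt {f g : FreeAlg K X} (hg : lcoeff g ≠ 0) (hgf : lmon g = lmon f)
    (hne : f - (lcoeff f * (lcoeff g)⁻¹) • g ≠ 0) :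
    lmon (f - (lcoeff f * (lcoeff g)⁻¹) • g) < lmon f := by
  refine lmon_lt_of_coeff_eq_zero hne ?_ fun _ => le_lmon_of_mem_support_sub_smul hgf.le _
  have hgcoeff : g.coeff (lmon f) = lcoeff g := by rw [← hgf]; rfl
  rw [MonoidAlgebra.coeff_sub, MonoidAlgebra.coeff_smul, Finsupp.sub_apply, Finsupp.smul_apply,
    hgcoeff, smul_eq_mul, mul_assoc, inv_mul_cancel₀ hg, mul_one]
  exact sub_self _

lemma lmon_mon_mul_mul_mon (hmon : ∀ a b u v : FreeMonoid X, u ≤ v → a * u * b ≤ a * v * b)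
    (a b : FreeMonoid X) {g : FreeAlg K X} (hg : g ≠ 0) :
    lmon (mon K a * g * mon K b) = a * lmon g * b := by
  refine lmon_eq_of_coeff_ne_zero ?_ fun m hm => ?_
  · rw [coeff_mon_mul_mul_mon_apply]
    exact lcoeff_ne_zero hg
  · rw [coeff_mon_mul_mul_mon] at hm
    obtain ⟨u, hu, rfl⟩ := Finset.mem_image.1 (Finsupp.mapDomain_support hm)
    exact hmon a b _ _ (le_lmon hu)

lemma lcoeff_mon_mul_mul_mon (hmon : ∀ a b u v : FreeMonoid X, u ≤ v → a * u * b ≤ a * v * b)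
    (a b : FreeMonoid X) {g : FreeAlg K X} (hg : g ≠ 0) :
    lcoeff (mon K a * g * mon K b) = lcoeff g := by
  rw [lcoeff, lmon_mon_mul_mul_mon hmon a b hg, coeff_mon_mul_mul_mon_apply]
  rfl

end Monomials

lemma sigW_sub_smul_mapDomain_le {K X : Type*} [Field K] {r : ℕ} [LinearOrder (MonMod X r)]
    (hmod : ∀ (a b : FreeMonoid X) (μ ν : MonMod X r), μ ≤ ν → act a b μ ≤ act a b ν)
    (α : FreeBimod K X r) (c : K) (a b : FreeMonoid X) (γ : FreeBimod K X r) :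
    sigW (α - c • Finsupp.mapDomain (act a b) γ) ≤ sigW α ⊔ WithBot.map (act a b) (sigW γ) := by
  refine (Finset.max_mono Finsupp.support_sub).trans ?_
  rw [Finset.max_union]
  refine sup_le_sup le_rfl ((Finset.max_mono Finsupp.support_smul).trans (Finset.max_le ?_))
  intro μ hμ
  obtain ⟨ν, hν, rfl⟩ := Finset.mem_image.1 (Finsupp.mapDomain_support hμ)
  rw [sigW, ← Finset.coe_max' ⟨ν, hν⟩, WithBot.map_coe, WithBot.coe_le_coe]
  exact hmod a b _ _ (Finset.le_max' _ _ hν)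

lemma evalS_sredResult {K X : Type*} [Field K] [LinearOrder (FreeMonoid X)] {r : ℕ}
    {F : Fin r → FreeAlg K X} {f g : FreeAlg K X} {α γ : FreeBimod K X r} (hf : f = evalS F α)
    (hg : g = evalS F γ) (a b : FreeMonoid X) :
    (sredResult f α g γ a b).1 = evalS F (sredResult f α g γ a b).2 := by
  simp only [sredResult, evalS_sub, evalS_smul, evalS_mapDomain_act, ← hf, ← hg]

section Labelled

variable {K X : Type*} [Field K] [LinearOrder (FreeMonoid X)] {r : ℕ}
  [LinearOrder (MonMod X r)] {F : Fin r → FreeAlg K X}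
  {G H : Set (FreeAlg K X × FreeBimod K X r)}

def TopSDiv (p q : FreeAlg K X × FreeBimod K X r) : Prop :=
  ∃ a b : FreeMonoid X, a * lmon p.1 * b = lmon q.1 ∧ WithBot.map (act a b) (sigW p.2) ≤ sigW q.2

lemma topSDiv_of_lmon_eq {p q : FreeAlg K X × FreeBimod K X r} (hlmon : lmon p.1 = lmon q.1)
    (hsig : sigW p.2 ≤ sigW q.2) : TopSDiv p q :=
  ⟨1, 1, by rw [one_mul, mul_one, hlmon], by simpa using hsig⟩

lemma TopSDiv.trans
    (hmod : ∀ (a b : FreeMonoid X) (μ ν : MonMod X r), μ ≤ ν → act a b μ ≤ act a b ν)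
    {p q s : FreeAlg K X × FreeBimod K X r} (hpq : TopSDiv p q) (hqs : TopSDiv q s) :
    TopSDiv p s := by
  obtain ⟨a, b, hab, hsig⟩ := hpq
  obtain ⟨a', b', hab', hsig'⟩ := hqs
  refine ⟨a' * a, b * b', by rw [← hab', ← hab]; simp only [mul_assoc], ?_⟩
  rw [← act_comp_act, ← WithBot.map_map]
  exact (Monotone.withBot_map (fun _ _ h => hmod a' b' _ _ h) hsig).trans hsig'

lemma TopSDiv.lmon_eq_and_sigW_eq {p q : FreeAlg K X × FreeBimod K X r} (hpq : TopSDiv p q)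
    (hqp : TopSDiv q p) : lmon p.1 = lmon q.1 ∧ sigW p.2 = sigW q.2 := by
  obtain ⟨a, b, hab, hsig⟩ := hpq
  obtain ⟨a', b', hab', hsig'⟩ := hqp
  have hlen := congrArg FreeMonoid.length hab
  have hlen' := congrArg FreeMonoid.length hab'
  simp only [FreeMonoid.length_mul] at hlen hlen'
  obtain rfl : a = 1 := FreeMonoid.length_eq_zero.1 (by omega)
  obtain rfl : b = 1 := FreeMonoid.length_eq_zero.1 (by omega)
  obtain rfl : a' = 1 := FreeMonoid.length_eq_zero.1 (by omega)
  obtain rfl : b' = 1 := FreeMonoid.length_eq_zero.1 (by omega)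
  simp only [one_mul, mul_one, act_one_one, WithBot.map_id, id] at hab hsig hsig'
  exact ⟨hab, hsig.antisymm hsig'⟩

lemma topSRed_iff {f : FreeAlg K X} {α : FreeBimod K X r} :
    TopSRed G f α ↔ ∃ p ∈ G, p.1 ≠ 0 ∧ TopSDiv p (f, α) :=
  ⟨fun ⟨g, γ, hgG, hg0, hdiv⟩ => ⟨(g, γ), hgG, hg0, hdiv⟩,
    fun ⟨⟨g, γ⟩, hgG, hg0, hdiv⟩ => ⟨g, γ, hgG, hg0, hdiv⟩⟩

lemma TopSRed.of_topSDiv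
    (hmod : ∀ (a b : FreeMonoid X) (μ ν : MonMod X r), μ ≤ ν → act a b μ ≤ act a b ν)
    {p q : FreeAlg K X × FreeBimod K X r} (hq : TopSRed G q.1 q.2) (hqp : TopSDiv q p) :
    TopSRed G p.1 p.2 := by
  obtain ⟨s, hsG, hs0, hsq⟩ := topSRed_iff.1 hq
  exact topSRed_iff.2 ⟨s, hsG, hs0, hsq.trans hmod hqp⟩

/-- A step that does not cancel the leading monomial leaves it in place and does not increase the
signature. -/
lemma SRedStep.topSRed_or_topSDiv
    (hmon : ∀ a b u v : FreeMonoid X, u ≤ v → a * u * b ≤ a * v * b)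
    (hmod : ∀ (a b : FreeMonoid X) (μ ν : MonMod X r), μ ≤ ν → act a b μ ≤ act a b ν)
    {p q : FreeAlg K X × FreeBimod K X r} (h : SRedStep G p q) (hp : p.1 ≠ 0) :
    TopSRed G p.1 p.2 ∨ q.1 ≠ 0 ∧ TopSDiv q p := by
  obtain ⟨g, γ, hgG, hg0, a, b, hmem, hsig, rfl⟩ := h
  rcases (le_lmon hmem).eq_or_lt with htop | hlt
  · exact .inl ⟨g, γ, hgG, hg0, a, b, htop, hsig⟩
  · rw [← lmon_mon_mul_mul_mon (K := K) hmon a b hg0] at hlt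
    obtain ⟨hne, hlmon⟩ := lmon_sub_smul_of_lmon_lt hp hlt _
    exact .inr ⟨hne, topSDiv_of_lmon_eq hlmon
      ((sigW_sub_smul_mapDomain_le hmod _ _ _ _ _).trans (sup_le le_rfl hsig))⟩

lemma topSRed_of_reflTransGen
    (hmon : ∀ a b u v : FreeMonoid X, u ≤ v → a * u * b ≤ a * v * b)
    (hmod : ∀ (a b : FreeMonoid X) (μ ν : MonMod X r), μ ≤ ν → act a b μ ≤ act a b ν)
    {p : FreeAlg K X × FreeBimod K X r} {σ : FreeBimod K X r}
    (h : Relation.ReflTransGen (SRedStep G) p (0, σ)) (hp : p.1 ≠ 0) : TopSRed G p.1 p.2 := by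
  induction h using Relation.ReflTransGen.head_induction_on with
  | refl => exact absurd rfl hp
  | head hstep _ ih =>
    rcases hstep.topSRed_or_topSDiv hmon hmod hp with htop | ⟨hq, hqp⟩
    · exact htop
    · exact (ih hq).of_topSDiv hmod hqp

lemma LabGB.topSRed
    (hmon : ∀ a b u v : FreeMonoid X, u ≤ v → a * u * b ≤ a * v * b)
    (hmod : ∀ (a b : FreeMonoid X) (μ ν : MonMod X r), μ ≤ ν → act a b μ ≤ act a b ν)
    (hG : LabGB F G) {f : FreeAlg K X} {α : FreeBimod K X r} (hfα : f = evalS F α)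
    (hf : f ≠ 0) : TopSRed G f α :=
  let ⟨_, hchain⟩ := hG.2 f α hfα
  topSRed_of_reflTransGen hmon hmod hchain hf

lemma exists_sredStep_of_topSRed
    (hmon : ∀ a b u v : FreeMonoid X, u ≤ v → a * u * b ≤ a * v * b)
    (hG : InLab F G) {f : FreeAlg K X} {α : FreeBimod K X r} (hfα : f = evalS F α)
    (hf : f ≠ 0) (h : TopSRed G f α) :
    ∃ q, SRedStep G (f, α) q ∧ q.1 = evalS F q.2 ∧ (q.1 = 0 ∨ lmon q.1 < lmon f) := by
  obtain ⟨g, γ, hgG, hg0, a, b, hab, hsig⟩ := h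
  have hlmon := lmon_mon_mul_mul_mon (K := K) hmon a b hg0
  have hlcoeff := lcoeff_mon_mul_mul_mon (K := K) hmon a b hg0
  refine ⟨sredResult f α g γ a b, ⟨g, γ, hgG, hg0, a, b, hab ▸ lmon_mem_support hf, hsig, rfl⟩,
    evalS_sredResult hfα (hG _ hgG).1 a b, ?_⟩
  have hlt := lmon_sub_smul_lt (f := f) (hlcoeff ▸ lcoeff_ne_zero hg0) (hlmon.trans hab)
  rw [hlcoeff] at hlt
  rw [or_iff_not_imp_left]
  simp only [sredResult, hab]
  exact hlt

lemma labGB_iff [WellFoundedLT (FreeMonoid X)]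
    (hmon : ∀ a b u v : FreeMonoid X, u ≤ v → a * u * b ≤ a * v * b)
    (hmod : ∀ (a b : FreeMonoid X) (μ ν : MonMod X r), μ ≤ ν → act a b μ ≤ act a b ν) :
    LabGB F G ↔ InLab F G ∧ ∀ f α, f = evalS F α → f ≠ 0 → TopSRed G f α := by
  refine ⟨fun hG => ⟨hG.1, fun f α => hG.topSRed hmon hmod⟩, fun ⟨hIn, htop⟩ => ⟨hIn, ?_⟩⟩
  suffices ∀ w : FreeMonoid X, ∀ f α, lmon f = w → f = evalS F α → SRedToZero G (f, α) from
    fun f α => this _ f α rfl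
  intro w
  induction w using WellFoundedLT.induction with
  | ind w ih =>
    rintro f α rfl hfα
    by_cases hf : f = 0
    · exact ⟨α, hf ▸ .refl⟩
    obtain ⟨q, hstep, hq, hq0 | hlt⟩ :=
      exists_sredStep_of_topSRed hmon hIn hfα hf (htop f α hfα hf)
    · exact ⟨q.2, .single (hq0 ▸ hstep)⟩
    · obtain ⟨σ, hσ⟩ := ih _ hlt q.1 q.2 rfl hq
      exact ⟨σ, .head hstep hσ⟩

lemma LabGB.diff_singleton [WellFoundedLT (FreeMonoid X)]
    (hmon : ∀ a b u v : FreeMonoid X, u ≤ v → a * u * b ≤ a * v * b)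
    (hmod : ∀ (a b : FreeMonoid X) (μ ν : MonMod X r), μ ≤ ν → act a b μ ≤ act a b ν)
    (hG : LabGB F G) {p : FreeAlg K X × FreeBimod K X r} (hp : TopSRed (G \ {p}) p.1 p.2) :
    LabGB F (G \ {p}) := by
  rw [labGB_iff hmon hmod] at hG ⊢
  refine ⟨fun q hq => hG.1 q hq.1, fun f α hfα hf => ?_⟩
  obtain ⟨q, hqG, hq0, hqf⟩ := topSRed_iff.1 (hG.2 f α hfα hf)
  by_cases hqp : q = p
  · exact hp.of_topSDiv hmod (hqp ▸ hqf)
  · exact topSRed_iff.2 ⟨q, ⟨hqG, hqp⟩, hq0, hqf⟩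

lemma LabGB.exists_subset_minLabGB [WellFoundedLT (FreeMonoid X)]
    (hmon : ∀ a b u v : FreeMonoid X, u ≤ v → a * u * b ≤ a * v * b)
    (hmod : ∀ (a b : FreeMonoid X) (μ ν : MonMod X r), μ ≤ ν → act a b μ ≤ act a b ν)
    (hG : LabGB F G) (hfin : G.Finite) : ∃ G' ⊆ G, MinLabGB F G' := by
  have hfin' : {G' | G' ⊆ G ∧ LabGB F G'}.Finite := hfin.finite_subsets.subset fun _ h => h.1
  obtain ⟨G', -, hmin⟩ := hfin'.exists_le_minimal ⟨subset_rfl, hG⟩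
  obtain ⟨hG'G, hG'⟩ := hmin.prop
  refine ⟨G', hG'G, hG', fun p hp hred => ?_⟩
  have hsub := hmin.le_of_le ⟨Set.sdiff_subset.trans hG'G, hG'.diff_singleton hmon hmod hred⟩
    Set.sdiff_subset
  exact (hsub hp).2 rfl

lemma MinLabGB.eq_of_topSDiv (hG : MinLabGB F G) {p q : FreeAlg K X × FreeBimod K X r}
    (hp : p ∈ G) (hq : q ∈ G) (hqp : TopSDiv q p) : q = p := by
  by_contra hne
  exact hG.2 p hp (topSRed_iff.2 ⟨q, ⟨hq, hne⟩, (hG.1.1 q hq).2, hqp⟩)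

lemma MinLabGB.exists_lmon_eq_sigW_eq
    (hmon : ∀ a b u v : FreeMonoid X, u ≤ v → a * u * b ≤ a * v * b)
    (hmod : ∀ (a b : FreeMonoid X) (μ ν : MonMod X r), μ ≤ ν → act a b μ ≤ act a b ν)
    (hG : MinLabGB F G) (hH : LabGB F H) {p : FreeAlg K X × FreeBimod K X r} (hp : p ∈ G) :
    ∃ q ∈ H, lmon q.1 = lmon p.1 ∧ sigW q.2 = sigW p.2 := by
  obtain ⟨hpI, hp0⟩ := hG.1.1 p hp
  obtain ⟨q, hqH, hq0, hqp⟩ := topSRed_iff.1 (hH.topSRed hmon hmod hpI hp0)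
  obtain ⟨p', hp'G, -, hp'q⟩ := topSRed_iff.1 (hG.1.topSRed hmon hmod (hH.1 q hqH).1 hq0)
  obtain rfl := hG.eq_of_topSDiv hp hp'G (hp'q.trans hmod hqp)
  exact ⟨q, hqH, hqp.lmon_eq_and_sigW_eq hp'q⟩

lemma MinLabGB.mk_le
    (hmon : ∀ a b u v : FreeMonoid X, u ≤ v → a * u * b ≤ a * v * b)
    (hmod : ∀ (a b : FreeMonoid X) (μ ν : MonMod X r), μ ≤ ν → act a b μ ≤ act a b ν)
    (hG : MinLabGB F G) (hH : LabGB F H) : Cardinal.mk G ≤ Cardinal.mk H := by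
  choose φ hφH hlmon hsig using fun p : G => hG.exists_lmon_eq_sigW_eq hmon hmod hH p.2
  refine Cardinal.mk_le_of_injective (f := fun p => (⟨φ p, hφH p⟩ : H)) fun p p' hpp' => ?_
  have hφ : φ p = φ p' := congrArg Subtype.val hpp'
  refine Subtype.ext (hG.eq_of_topSDiv p'.2 p.2 (topSDiv_of_lmon_eq ?_ ?_))
  · rw [← hlmon, ← hlmon, hφ]
  · rw [← hsig, ← hsig p', hφ]

end Labelled

theorem minimal_labGB_cardinality_general {K X : Type*} [Field K] {r : ℕ}
    [LinearOrder (FreeMonoid X)] [WellFoundedLT (FreeMonoid X)]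
    [LinearOrder (MonMod X r)]
    (hmon : ∀ a b u v : FreeMonoid X, u ≤ v → a * u * b ≤ a * v * b)
    (hmod : ∀ (a b : FreeMonoid X) (μ ν : MonMod X r), μ ≤ ν → act a b μ ≤ act a b ν)
    (F : Fin r → FreeAlg K X) :
    (∀ G H : Set (FreeAlg K X × FreeBimod K X r),
      MinLabGB F G → MinLabGB F H → Cardinal.mk ↥G = Cardinal.mk ↥H) ∧
    ((∃ G : Set (FreeAlg K X × FreeBimod K X r), LabGB F G ∧ G.Finite) ↔
      (∃ G : Set (FreeAlg K X × FreeBimod K X r), MinLabGB F G ∧ G.Finite)) := by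
  refine ⟨fun G H hG hH => (hG.mk_le hmon hmod hH.1).antisymm (hH.mk_le hmon hmod hG.1),
    fun ⟨G, hG, hfin⟩ => ?_, fun ⟨G, hG, hfin⟩ => ⟨G, hG.1, hfin⟩⟩
  obtain ⟨G', hG'G, hG'⟩ := hG.exists_subset_minLabGB hmon hmod hfin
  exact ⟨G', hG', hfin.subset hG'G⟩

/-- Any two minimal labelled Gröbner bases of `I^[Σ]` have the same cardinality.
Consequently, `I^[Σ]` has a finite labelled Gröbner basis iff it has a finite minimal
labelled Gröbner basis. -/
theorem minimal_labGB_cardinality {K X : Type*} [Field K] {r : ℕ}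
    [LinearOrder (FreeMonoid X)] [WellFoundedLT (FreeMonoid X)]
    [LinearOrder (MonMod X r)] [WellFoundedLT (MonMod X r)]
    (hmon : ∀ a b u v : FreeMonoid X, u ≤ v → a * u * b ≤ a * v * b)
    (hmod : ∀ (a b : FreeMonoid X) (μ ν : MonMod X r), μ ≤ ν → act a b μ ≤ act a b ν)
    (hcomp : ∀ (u v : FreeMonoid X) (i : Fin r),
      (u ≤ v ↔ (⟨u, i, 1⟩ : MonMod X r) ≤ ⟨v, i, 1⟩) ∧
      (u ≤ v ↔ (⟨1, i, u⟩ : MonMod X r) ≤ ⟨1, i, v⟩))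
    (F : Fin r → FreeAlg K X) :
    (∀ G H : Set (FreeAlg K X × FreeBimod K X r),
      MinLabGB F G → MinLabGB F H → Cardinal.mk ↥G = Cardinal.mk ↥H) ∧
    ((∃ G : Set (FreeAlg K X × FreeBimod K X r), LabGB F G ∧ G.Finite) ↔
      (∃ G : Set (FreeAlg K X × FreeBimod K X r), MinLabGB F G ∧ G.Finite)) :=
  minimal_labGB_cardinality_general hmon hmod F
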